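/- arXiv:2411.04729 — 2 statements merged into one kernel-verified Lean document; each statement's English description precedes it below -/
import Mathlib

section
/- Let G be a simple graph on a finite vertex set W of size p, and let v ∈ W be a vertex adjacent to every other vertex of G. For an ordering (bijection) σ : W → {1,…,p}, call an ordered pair of distinct vertices (a,b) with σ(a) < σ(b) a σ-fill-in pair if there is a path in G from a to b all of whose intermediate vertices u satisfy σ(u) < σ(a), and set n_L(σ) = p + |{σ-fill-in pairs}|. Then for any two orderings σ and σ' that induce the same relative order on W∖{v}, if σ'(v) ≥ σ(v) then n_L(σ') ≤ n_L(σ); in particular, the ordering that agrees with σ on W∖{v} and places v last satisfies n_L ≤ n_L(σ). -/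
open scoped Classical

/-- For a simple graph `G` on a finite vertex set `W` and an ordering `σ : W ≃ Fin p`,
the ordered pair of distinct vertices `(a, b)` with `σ a < σ b` is a *σ-fill-in pair*
if there is a walk in `G` from `a` to `b` all of whose intermediate vertices `u`
satisfy `σ u < σ a`. -/
def SigmaFillIn {W : Type*} [Fintype W] (G : SimpleGraph W)
    (σ : W ≃ Fin (Fintype.card W)) (a b : W) : Prop :=
  a ≠ b ∧ σ a < σ b ∧
    ∃ w : G.Walk a b, ∀ u ∈ w.support, u = a ∨ u = b ∨ σ u < σ a

/-- `n_L(σ) = p + #{σ-fill-in pairs}`, the number of potential non-zeros of the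
Cholesky factor under the variable ordering `σ`. -/
noncomputable def nL {W : Type*} [Fintype W] (G : SimpleGraph W)
    (σ : W ≃ Fin (Fintype.card W)) : ℕ :=
  Fintype.card W +
    (Finset.univ.filter (fun q : W × W => SigmaFillIn G σ q.1 q.2)).card

/-
Pairs not containing `v` keep their relative order, and their fill-in walks stay fill-in walks:
the only intermediate vertex whose comparison with the start `a` could change is `v`, and
moving `v` later can only turn `σ v < σ a` into `σ' v > σ' a`, never the reverse. Every pair
containing `v` is a σ-fill-in pair in its σ-sorted direction, because `v` is adjacent to
everything. Hence sorting by `σ` injects the σ'-fill-in pairs into the σ-fill-in pairs.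
-/

lemma Equiv.card_filter_apply_lt {W : Type*} [Fintype W] {n : ℕ} (σ : W ≃ Fin n) (c : Fin n) :
    (Finset.univ.filter fun x => σ x < c).card = c := by
  rw [← Fin.card_Iio c, ← Finset.card_map σ.symm.toEmbedding]
  congr 1
  ext x
  simp

lemma Equiv.lt_apply_of_moved_later {W : Type*} [Fintype W] {n : ℕ} {v : W}
    {σ σ' : W ≃ Fin n} (hrel : ∀ a b : W, a ≠ v → b ≠ v → (σ a < σ b ↔ σ' a < σ' b))
    (hpos : σ v ≤ σ' v) {a : W} (ha : a ≠ v) (h' : σ' v < σ' a) : σ v < σ a := by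
  by_contra! hle
  -- `#{x | σ' x < σ' v} = σ' v ≥ σ v > σ a = #{x | σ x < σ a}`, yet the first set lies in the second.
  have hlt : σ a < σ v := lt_of_le_of_ne hle (σ.injective.ne ha)
  have hsub : (Finset.univ.filter fun x => σ' x < σ' v) ⊆
      (Finset.univ.filter fun x => σ x < σ a) := by
    intro x hx
    simp only [Finset.mem_filter, Finset.mem_univ, true_and] at hx ⊢
    have hxv : x ≠ v := by rintro rfl; exact lt_irrefl _ hx
    exact (hrel x a hxv ha).2 (hx.trans h')
  have hcard := Finset.card_le_card hsub
  rw [σ'.card_filter_apply_lt, σ.card_filter_apply_lt] at hcard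
  have : (σ a : ℕ) < σ v := hlt
  have : (σ v : ℕ) ≤ σ' v := hpos
  omega

section SigmaFillIn

variable {W : Type*} [Fintype W] {G : SimpleGraph W} {σ σ' : W ≃ Fin (Fintype.card W)}

lemma SigmaFillIn.of_adj {a b : W} (h : G.Adj a b) (hlt : σ a < σ b) : SigmaFillIn G σ a b :=
  ⟨h.ne, hlt, h.toWalk, by simp⟩

lemma SigmaFillIn.of_moved_later {v a b : W}
    (hrel : ∀ a b : W, a ≠ v → b ≠ v → (σ a < σ b ↔ σ' a < σ' b)) (hpos : σ v ≤ σ' v)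
    (ha : a ≠ v) (hb : b ≠ v) (h : SigmaFillIn G σ' a b) : SigmaFillIn G σ a b := by
  obtain ⟨hne, hlt, w, hw⟩ := h
  refine ⟨hne, (hrel a b ha hb).2 hlt, w, fun u hu => ?_⟩
  rcases hw u hu with rfl | rfl | hua
  · exact .inl rfl
  · exact .inr (.inl rfl)
  · refine .inr (.inr ?_)
    by_cases huv : u = v
    · subst huv
      exact Equiv.lt_apply_of_moved_later hrel hpos ha hua
    · exact (hrel u a huv ha).2 hua

end SigmaFillIn

def sortBy {W : Type*} {n : ℕ} (σ : W ≃ Fin n) (q : W × W) : W × W :=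
  if σ q.1 < σ q.2 then q else q.swap

section sortBy

variable {W : Type*} {n : ℕ}

lemma sortBy_eq_or_eq_swap (σ : W ≃ Fin n) (q : W × W) : sortBy σ q = q ∨ sortBy σ q = q.swap := by
  unfold sortBy
  split_ifs
  exacts [.inl rfl, .inr rfl]

lemma sortBy_of_lt {σ : W ≃ Fin n} {q : W × W} (h : σ q.1 < σ q.2) : sortBy σ q = q :=
  if_pos h

lemma sortBy_injOn (σ σ' : W ≃ Fin n) : Set.InjOn (sortBy σ) {q | σ' q.1 < σ' q.2} := by
  intro q (hq : σ' q.1 < σ' q.2) r (hr : σ' r.1 < σ' r.2) hqr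
  rcases sortBy_eq_or_eq_swap σ q with hq' | hq' <;>
    rcases sortBy_eq_or_eq_swap σ r with hr' | hr' <;> rw [hq', hr'] at hqr
  · exact hqr
  · subst hqr; exact absurd hr (lt_asymm hq)
  · subst hqr; exact absurd hr (lt_asymm hq)
  · exact Prod.swap_injective hqr

lemma SigmaFillIn.sortBy_of_adj [Fintype W] {G : SimpleGraph W}
    {σ : W ≃ Fin (Fintype.card W)} {a b : W} (h : G.Adj a b) :
    SigmaFillIn G σ (sortBy σ (a, b)).1 (sortBy σ (a, b)).2 := by
  unfold sortBy
  split_ifs with hlt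
  · exact .of_adj h hlt
  · exact .of_adj h.symm (lt_of_le_of_ne (not_lt.1 hlt) (σ.injective.ne h.ne.symm))

end sortBy

/-- If `v` is adjacent to every other vertex of `G`, then for any two orderings `σ`, `σ'`
inducing the same relative order on `W \ {v}`, moving `v` later in the ordering does not
increase `n_L`: if `σ v ≤ σ' v` then `n_L(σ') ≤ n_L(σ)`. -/
theorem nL_antitone_in_position_of_dominating_vertex
    {W : Type*} [Fintype W] (G : SimpleGraph W) (v : W)
    (hv : ∀ w : W, w ≠ v → G.Adj v w)
    (σ σ' : W ≃ Fin (Fintype.card W))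
    (hrel : ∀ a b : W, a ≠ v → b ≠ v → (σ a < σ b ↔ σ' a < σ' b))
    (hpos : σ v ≤ σ' v) :
    nL G σ' ≤ nL G σ := by
  have hmaps : ∀ q : W × W, SigmaFillIn G σ' q.1 q.2 →
      SigmaFillIn G σ (sortBy σ q).1 (sortBy σ q).2 := by
    rintro ⟨a, b⟩ hab
    by_cases ha : a = v
    · subst ha
      exact .sortBy_of_adj (hv b hab.1.symm)
    by_cases hb : b = v
    · subst hb
      exact .sortBy_of_adj (hv a ha).symm
    rw [sortBy_of_lt ((hrel a b ha hb).2 hab.2.1)]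
    exact hab.of_moved_later hrel hpos ha hb
  refine Nat.add_le_add_left (Finset.card_le_card_of_injOn (sortBy σ) ?_ ?_) _
  · intro q hq
    simpa using hmaps q (by simpa using hq)
  · exact (sortBy_injOn σ σ').mono fun q hq => (Finset.mem_filter.1 hq).2.2.1
end

section
/- Let G ≥ 2 and d ≥ 2 be integers. Consider the vertex set {θ_{1,1},…,θ_{1,G}, θ_{2,1},…,θ_{2,G}, θ_0} with the ordering θ_{1,1},…,θ_{1,G}, θ_{2,1},…,θ_{2,G}, θ_0. Define r(1) = 1 and r(j) = ⌈(j−1)/d⌉ for j ≥ 2. Let H be any simple graph on this vertex set that contains, for every j ∈ {1,…,G}, the edges {θ_{1,j}, θ_{2,j}} and {θ_{1,r(j)}, θ_{2,j}}. Then the number of pairs (m,j) with 1 ≤ m ≤ j ≤ G such that m = j or (θ_{2,m}, θ_{2,j}) is a fill-in pair of H (for the given ordering) is at least ((d−1)/d)·(G(G+1)/2 − 1). In particular n_L = Ω(G²) for this design, even though the graph has only O(Gd) edges. -/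
/-!
Since `r(1) = 1` and `r(j) < j` for `j ≥ 2`, following the edges `θ_{2,j} — θ_{1,r(j)} — θ_{2,r(j)}`
from any `θ_{2,k}` reaches `θ_{1,1}` through vertices that come no later than `θ_{2,k}`. So for
`r(j) ≤ m < j`, going from `θ_{2,m}` down to `θ_{1,1}`, back up to `θ_{2,r(j)}` and across
`θ_{1,r(j)}` to `θ_{2,j}` is a fill-in walk. Each `j` thus contributes the
`j - r(j) + 1 ≥ j - (j - 1)/d` pairs with `r(j) ≤ m ≤ j`, and
`∑ j (j - (j - 1)/d) = G(G+1)/2 - G(G-1)/(2d) ≥ ((d-1)/d)(G(G+1)/2 - 1)`.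
-/

open scoped Classical

/-- The vertex set `{θ_{1,1},…,θ_{1,G}, θ_{2,1},…,θ_{2,G}, θ_0}` of the crossed design
of Example 1 (levels are 0-indexed). -/
abbrev Vtx (G : ℕ) := Fin G ⊕ Fin G ⊕ Unit

/-- Position of a vertex in the ordering `θ_{1,1},…,θ_{1,G}, θ_{2,1},…,θ_{2,G}, θ_0`. -/
def pos {G : ℕ} : Vtx G → ℕ
  | Sum.inl a => a.val
  | Sum.inr (Sum.inl b) => G + b.val
  | Sum.inr (Sum.inr _) => 2 * G

/-- The vertex `θ_{1,j}` (with `j` 0-indexed). -/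
def θ1 {G : ℕ} (a : Fin G) : Vtx G := Sum.inl a

/-- The vertex `θ_{2,j}` (with `j` 0-indexed). -/
def θ2 {G : ℕ} (a : Fin G) : Vtx G := Sum.inr (Sum.inl a)

/-- The 0-indexed version of `r(1) = 1`, `r(j) = ⌈(j−1)/d⌉` for `j ≥ 2`:
level index `i` (0-based, i.e. `j = i + 1`) is mapped to `r(j) - 1 = (i - 1) / d`. -/
def rIdx {G : ℕ} (d : ℕ) (i : Fin G) : Fin G :=
  ⟨(i.val - 1) / d,
    lt_of_le_of_lt (le_trans (Nat.div_le_self _ _) (Nat.sub_le _ _)) i.isLt⟩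

/-- Fill-in pair of `H` with respect to the ordering given by `pos`: `a` comes before `b`
and there is a walk from `a` to `b` whose intermediate vertices all come strictly
before `a`. -/
def FillIn {G : ℕ} (H : SimpleGraph (Vtx G)) (a b : Vtx G) : Prop :=
  a ≠ b ∧ pos a < pos b ∧
    ∃ w : H.Walk a b, ∀ u ∈ w.support, u = a ∨ u = b ∨ pos u < pos a


open Finset

namespace SimpleGraph

variable {V : Type*} {H : SimpleGraph V} {s t : Set V} {a b c : V}

def ReachableIn (H : SimpleGraph V) (s : Set V) (a b : V) : Prop :=
  ∃ w : H.Walk a b, ∀ u ∈ w.support, u ∈ s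

lemma Adj.reachableIn (h : H.Adj a b) (ha : a ∈ s) (hb : b ∈ s) : H.ReachableIn s a b :=
  ⟨h.toWalk, by simp [ha, hb]⟩

lemma ReachableIn.symm (h : H.ReachableIn s a b) : H.ReachableIn s b a := by
  obtain ⟨w, hw⟩ := h
  exact ⟨w.reverse, fun u hu => hw u (by simpa using hu)⟩

lemma ReachableIn.trans (hab : H.ReachableIn s a b) (hbc : H.ReachableIn s b c) :
    H.ReachableIn s a c := by
  obtain ⟨p, hp⟩ := hab
  obtain ⟨q, hq⟩ := hbc
  exact ⟨p.append q, fun u hu => ((Walk.mem_support_append_iff p q).1 hu).elim (hp u) (hq u)⟩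

lemma ReachableIn.mono (hst : s ⊆ t) (h : H.ReachableIn s a b) : H.ReachableIn t a b :=
  let ⟨w, hw⟩ := h
  ⟨w, fun u hu => hst (hw u hu)⟩

end SimpleGraph

lemma Finset.card_filter_prod_eq_sum {α β : Type*} [Fintype α] [Fintype β]
    (p : α × β → Prop) [DecidablePred p] :
    #{q | p q} = ∑ b, #{a | p (a, b)} := by
  simp only [card_filter]
  exact Fintype.sum_prod_type_right _

lemma le_sum_range_add_one_sub_div (d G : ℕ) :
    ((d : ℝ) - 1) / d * (G * (G + 1) / 2 - 1) ≤ ∑ j ∈ range G, ((j : ℝ) + 1 - j / d) := by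
  rcases Nat.eq_zero_or_pos d with rfl | hd
  · -- division by `d = 0` is `0` in `ℝ`
    simp only [CharP.cast_eq_zero, div_zero, zero_mul, sub_zero]
    positivity
  have hd' : (0 : ℝ) < d := by exact_mod_cast hd
  induction G with
  | zero =>
    have : (0 : ℝ) ≤ ((d : ℝ) - 1) / d :=
      div_nonneg (sub_nonneg.2 (by exact_mod_cast hd)) hd'.le
    simpa using this
  | succ G ih =>
    have step : ((d : ℝ) - 1) / d * (G + 1) = G + 1 - G / d - 1 / d := by
      field_simp
      ring
    have : (0 : ℝ) ≤ 1 / d := by positivity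
    rw [sum_range_succ]
    push_cast
    linarith

section CrossedDesign

variable {G d : ℕ} {H : SimpleGraph (Vtx G)}

@[simp] lemma pos_θ1 (a : Fin G) : pos (θ1 a) = a := rfl

@[simp] lemma pos_θ2 (a : Fin G) : pos (θ2 a) = G + a := rfl

lemma pos_injective : Function.Injective (pos : Vtx G → ℕ) := by
  rintro (a | b | _) (a' | b' | _) h <;> simp_all [pos, Fin.ext_iff] <;> omega

lemma fillIn_of_reachableIn {a b : Vtx G} (hab : pos a < pos b)
    (h : H.ReachableIn (insert b {u | pos u ≤ pos a}) a b) : FillIn H a b := by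
  obtain ⟨w, hw⟩ := h
  refine ⟨fun h => hab.ne (congrArg pos h), hab, w, fun u hu => ?_⟩
  rcases hw u hu with rfl | hu
  · exact Or.inr (Or.inl rfl)
  · exact hu.lt_or_eq.symm.imp (fun h => pos_injective h) Or.inr

lemma rIdx_le (d : ℕ) (i : Fin G) : rIdx d i ≤ i :=
  (Nat.div_le_self _ _).trans (Nat.sub_le _ _)

lemma rIdx_lt {i : Fin G} (hi : 0 < (i : ℕ)) : rIdx d i < i :=
  (Nat.div_le_self _ _).trans_lt (Nat.sub_lt hi Nat.one_pos)

lemma reachableIn_θ2_θ1_zero [NeZero G] (h1 : ∀ i : Fin G, H.Adj (θ1 i) (θ2 i))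
    (h2 : ∀ i : Fin G, H.Adj (θ1 (rIdx d i)) (θ2 i)) (k : Fin G) :
    H.ReachableIn {u | pos u ≤ pos (θ2 k)} (θ2 k) (θ1 0) := by
  induction k using WellFoundedLT.induction with
  | _ k ih =>
  by_cases hk : (k : ℕ) = 0
  · obtain rfl : k = 0 := Fin.ext hk
    exact (h1 0).symm.reachableIn (by simp) (by simp)
  have hlt := rIdx_lt (d := d) (Nat.pos_of_ne_zero hk)
  have hle : pos (θ2 (rIdx d k)) ≤ pos (θ2 k) := by simpa using hlt.le
  refine (h2 k).symm.reachableIn (by simp) (by simp; omega) |>.trans ?_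
  refine (h1 _).reachableIn (by simp; omega) hle |>.trans ?_
  exact (ih _ hlt).mono fun u hu => le_trans hu hle

lemma fillIn_θ2_of_rIdx_le (h1 : ∀ i : Fin G, H.Adj (θ1 i) (θ2 i))
    (h2 : ∀ i : Fin G, H.Adj (θ1 (rIdx d i)) (θ2 i)) {m j : Fin G} (hmj : m < j)
    (hr : rIdx d j ≤ m) : FillIn H (θ2 m) (θ2 j) := by
  have : NeZero G := NeZero.of_pos m.pos
  have hrm : pos (θ2 (rIdx d j)) ≤ pos (θ2 m) := by simpa using hr
  have down : H.ReachableIn {u | pos u ≤ pos (θ2 m)} (θ2 m) (θ1 0) :=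
    reachableIn_θ2_θ1_zero h1 h2 m
  have up : H.ReachableIn {u | pos u ≤ pos (θ2 m)} (θ1 0) (θ2 (rIdx d j)) :=
    ((reachableIn_θ2_θ1_zero h1 h2 _).mono fun u hu => le_trans hu hrm).symm
  have across : H.ReachableIn {u | pos u ≤ pos (θ2 m)} (θ2 (rIdx d j)) (θ1 (rIdx d j)) :=
    (h1 _).symm.reachableIn hrm (by simp; omega)
  refine fillIn_of_reachableIn (by simpa using hmj) ?_
  refine ((down.trans (up.trans across)).mono (Set.subset_insert _ _)).trans ?_
  exact (h2 j).reachableIn (Set.mem_insert_of_mem _ (by simp; omega)) (Set.mem_insert _ _)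

lemma add_one_sub_div_le_card_Icc_rIdx (d : ℕ) (j : Fin G) :
    (j : ℝ) + 1 - j / d ≤ #(Icc (rIdx d j) j) := by
  have hr : ((rIdx d j : ℕ) : ℝ) ≤ j / d :=
    Nat.cast_div_le.trans (by gcongr; exact_mod_cast Nat.sub_le _ _)
  rw [Fin.card_Icc, Nat.cast_sub (Nat.le_succ_of_le (rIdx_le d j))]
  push_cast
  linarith

end CrossedDesign

theorem fillIn_lower_bound_example_general (G d : ℕ)
    (H : SimpleGraph (Vtx G))
    (h1 : ∀ i : Fin G, H.Adj (θ1 i) (θ2 i))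
    (h2 : ∀ i : Fin G, H.Adj (θ1 (rIdx d i)) (θ2 i)) :
    ((d : ℝ) - 1) / d * (G * (G + 1) / 2 - 1)
      ≤ ((Finset.univ.filter (fun q : Fin G × Fin G =>
            q.1 ≤ q.2 ∧ (q.1 = q.2 ∨ FillIn H (θ2 q.1) (θ2 q.2)))).card : ℝ) := by
  have hIcc : ∀ j : Fin G,
      Icc (rIdx d j) j ⊆ ({m | m ≤ j ∧ (m = j ∨ FillIn H (θ2 m) (θ2 j))} : Finset (Fin G)) := by
    intro j m hm
    obtain ⟨hrm, hmj⟩ := mem_Icc.1 hm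
    simp only [mem_filter, mem_univ, true_and]
    exact ⟨hmj, hmj.eq_or_lt.imp id fun h => fillIn_θ2_of_rIdx_le h1 h2 h hrm⟩
  calc ((d : ℝ) - 1) / d * (G * (G + 1) / 2 - 1)
      ≤ ∑ j : Fin G, ((j : ℝ) + 1 - j / d) := by
        rw [Fin.sum_univ_eq_sum_range (fun j => (j : ℝ) + 1 - j / d)]
        exact le_sum_range_add_one_sub_div d G
    _ ≤ ∑ j : Fin G, (#(Icc (rIdx d j) j) : ℝ) :=
        sum_le_sum fun j _ => add_one_sub_div_le_card_Icc_rIdx d j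
    _ ≤ ∑ j : Fin G, (#{m | m ≤ j ∧ (m = j ∨ FillIn H (θ2 m) (θ2 j))} : ℝ) :=
        sum_le_sum fun j _ => Nat.cast_le.2 (card_le_card (hIcc j))
    _ = _ := by rw [card_filter_prod_eq_sum]; push_cast; rfl

/-- Example 1 of the paper: if `H` contains, for every level `j`, the edges
`{θ_{1,j}, θ_{2,j}}` and `{θ_{1,r(j)}, θ_{2,j}}`, then the number of pairs `(m, j)` with
`m ≤ j` such that `m = j` or `(θ_{2,m}, θ_{2,j})` is a fill-in pair of `H` is at least
`((d−1)/d)·(G(G+1)/2 − 1)`; hence `n_L = Ω(G²)`. -/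
theorem fillIn_lower_bound_example (G d : ℕ) (hG : 2 ≤ G) (hd : 2 ≤ d)
    (H : SimpleGraph (Vtx G))
    (h1 : ∀ i : Fin G, H.Adj (θ1 i) (θ2 i))
    (h2 : ∀ i : Fin G, H.Adj (θ1 (rIdx d i)) (θ2 i)) :
    ((d : ℝ) - 1) / d * (G * (G + 1) / 2 - 1)
      ≤ ((Finset.univ.filter (fun q : Fin G × Fin G =>
            q.1 ≤ q.2 ∧ (q.1 = q.2 ∨ FillIn H (θ2 q.1) (θ2 q.2)))).card : ℝ) :=
  fillIn_lower_bound_example_general G d H h1 h2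
end
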